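/- arXiv:2512.22663 — 2 statements merged into one kernel-verified Lean document; each statement's English description precedes it below -/
import Mathlib

section
/- Let (X, f_{1,∞}) be a minimal periodic non-autonomous dynamical system on a T₃ space X whose induced autonomous map g has a transitive point. Then (X, f_{1,∞}) is either topologically equicontinuous or Hausdorff sensitive. -/
open Topology Filter Set
open scoped Uniformity

/-- `traj f n = f_n ∘ ⋯ ∘ f_1` (and `traj f 0 = id`), i.e. `f_1^n`. -/
def traj {X : Type*} (f : ℕ → X → X) : ℕ → X → X
  | 0 => id
  | n + 1 => f (n + 1) ∘ traj f n

/-- The family `f` is periodic with period `p`. -/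
def PeriodicFam {X : Type*} (f : ℕ → X → X) (p : ℕ) : Prop :=
  ∀ n, f (n + p) = f n

/-- A set of naturals is thick: it contains arbitrarily long blocks of consecutive integers. -/
def Thick (T : Set ℕ) : Prop :=
  ∀ k : ℕ, ∃ n : ℕ, ∀ i ≤ k, n + i ∈ T

/-- A set of naturals is syndetic: it has bounded gaps. -/
def Syndetic (S : Set ℕ) : Prop :=
  ∃ M : ℕ, ∀ n : ℕ, ∃ m ∈ S, n ≤ m ∧ m ≤ n + M

/-- `x` is a transitive point of the non-autonomous system `(X, f_{1,∞})`. -/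
def TransPt {X : Type*} [TopologicalSpace X] (f : ℕ → X → X) (x : X) : Prop :=
  Dense (Set.range fun n => traj f n x)

/-- `x` is a transitive point of the autonomous system `(X, g)`. -/
def TransPtAut {X : Type*} [TopologicalSpace X] (g : X → X) (x : X) : Prop :=
  Dense (Set.range fun n => g^[n] x)

/-- `x` is an equicontinuity point of `(X, f_{1,∞})` on a uniform space. -/
def EqPt {X : Type*} [UniformSpace X] (f : ℕ → X → X) (x : X) : Prop :=
  ∀ E ∈ 𝓤 X, ∃ D ∈ 𝓤 X, ∀ y : X, (x, y) ∈ D → ∀ n : ℕ, (traj f n x, traj f n y) ∈ E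

/-- `x` is a syndetically equicontinuous point of `(X, f_{1,∞})`. -/
def SynEqPt {X : Type*} [UniformSpace X] (f : ℕ → X → X) (x : X) : Prop :=
  ∀ E ∈ 𝓤 X, ∃ U ∈ 𝓝 x,
    Syndetic {n : ℕ | ∀ x₁ ∈ U, ∀ x₂ ∈ U, (traj f n x₁, traj f n x₂) ∈ E}

/-- `x` is a syndetically equicontinuous point of the autonomous system `(X, g)`. -/
def SynEqPtAut {X : Type*} [UniformSpace X] (g : X → X) (x : X) : Prop :=
  ∀ E ∈ 𝓤 X, ∃ U ∈ 𝓝 x,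
    Syndetic {n : ℕ | ∀ x₁ ∈ U, ∀ x₂ ∈ U, (g^[n] x₁, g^[n] x₂) ∈ E}

/-- `N(U, D)` for the non-autonomous system. -/
def NSet {X : Type*} (f : ℕ → X → X) (U : Set X) (D : Set (X × X)) : Set ℕ :=
  {n : ℕ | 0 < n ∧ ∃ x ∈ U, ∃ y ∈ U, (traj f n x, traj f n y) ∉ D}

/-- `N(U, D)` for the autonomous system. -/
def NSetAut {X : Type*} (g : X → X) (U : Set X) (D : Set (X × X)) : Set ℕ :=
  {n : ℕ | 0 < n ∧ ∃ x ∈ U, ∃ y ∈ U, (g^[n] x, g^[n] y) ∉ D}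

/-- Sensitivity of `(X, f_{1,∞})`. -/
def Sensitive {X : Type*} [UniformSpace X] (f : ℕ → X → X) : Prop :=
  ∃ D ∈ 𝓤 X, ∀ U : Set X, IsOpen U → U.Nonempty → (NSet f U D).Nonempty

/-- Thick sensitivity of `(X, f_{1,∞})`. -/
def ThickSensitive {X : Type*} [UniformSpace X] (f : ℕ → X → X) : Prop :=
  ∃ D ∈ 𝓤 X, ∀ U : Set X, IsOpen U → U.Nonempty → Thick (NSet f U D)

/-- Thick sensitivity of the autonomous system `(X, g)`. -/
def ThickSensitiveAut {X : Type*} [UniformSpace X] (g : X → X) : Prop :=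
  ∃ D ∈ 𝓤 X, ∀ U : Set X, IsOpen U → U.Nonempty → Thick (NSetAut g U D)

/-- Multi-sensitivity of `(X, f_{1,∞})`. -/
def MultiSensitive {X : Type*} [UniformSpace X] (f : ℕ → X → X) : Prop :=
  ∃ D ∈ 𝓤 X, ∀ (k : ℕ) (U : Fin (k + 1) → Set X),
    (∀ i, IsOpen (U i)) → (∀ i, (U i).Nonempty) → (⋂ i, NSet f (U i) D).Nonempty

/-- Multi-sensitivity of the autonomous system `(X, g)`. -/
def MultiSensitiveAut {X : Type*} [UniformSpace X] (g : X → X) : Prop :=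
  ∃ D ∈ 𝓤 X, ∀ (k : ℕ) (U : Fin (k + 1) → Set X),
    (∀ i, IsOpen (U i)) → (∀ i, (U i).Nonempty) → (⋂ i, NSetAut g (U i) D).Nonempty

/-- Eventual sensitivity of `(X, f_{1,∞})` with a given entourage `D`. -/
def EvSensitiveWith {X : Type*} [UniformSpace X] (f : ℕ → X → X) (D : Set (X × X)) : Prop :=
  ∀ x : X, ∀ E ∈ 𝓤 X, ∃ n k : ℕ, 0 < n ∧ 0 < k ∧
    ∃ y : X, (traj f n x, y) ∈ E ∧ (traj f (n + k) x, traj f k y) ∉ D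

/-- Eventual sensitivity of `(X, f_{1,∞})`. -/
def EvSensitive {X : Type*} [UniformSpace X] (f : ℕ → X → X) : Prop :=
  ∃ D ∈ 𝓤 X, EvSensitiveWith f D

/-- Eventual sensitivity of the autonomous system `(X, g)` with entourage `D`. -/
def EvSensitiveAutWith {X : Type*} [UniformSpace X] (g : X → X) (D : Set (X × X)) : Prop :=
  ∀ x : X, ∀ E ∈ 𝓤 X, ∃ q k : ℕ, 0 < q ∧ 0 < k ∧
    ∃ y : X, (g^[q] x, y) ∈ E ∧ (g^[q + k] x, g^[k] y) ∉ D

/-- `(x, y)` is a (topological) equicontinuity pair for `(X, f_{1,∞})`. -/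
def EqPair {X : Type*} [TopologicalSpace X] (f : ℕ → X → X) (x y : X) : Prop :=
  ∀ O ∈ 𝓝 y, ∃ U ∈ 𝓝 x, ∃ V ∈ 𝓝 y, ∀ n : ℕ, 0 < n →
    ((traj f n '' U) ∩ V).Nonempty → traj f n '' U ⊆ O

/-- `(x, y)` is a syndetic equicontinuity pair for `(X, f_{1,∞})`. -/
def SynEqPair {X : Type*} [TopologicalSpace X] (f : ℕ → X → X) (x y : X) : Prop :=
  ∀ O ∈ 𝓝 y, ∃ U ∈ 𝓝 x, ∃ V ∈ 𝓝 y,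
    Syndetic {n : ℕ | ((traj f n '' U) ∩ V).Nonempty → traj f n '' U ⊆ O}

/-- `O` is a splitting neighborhood of `y` with respect to `x`. -/
def SplittingNbhd {X : Type*} [TopologicalSpace X] (f : ℕ → X → X) (x y : X) (O : Set X) :
    Prop :=
  O ∈ 𝓝 y ∧ ∀ U ∈ 𝓝 x, ∀ V ∈ 𝓝 y, ∃ n : ℕ, 0 < n ∧
    ((traj f n '' U) ∩ V).Nonempty ∧ ¬ traj f n '' U ⊆ O

/-- A finite open cover of `X`. -/
def IsFinOpenCover {X : Type*} [TopologicalSpace X] (𝒰 : Finset (Set X)) : Prop :=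
  (∀ U ∈ 𝒰, IsOpen U) ∧ ⋃₀ (↑𝒰 : Set (Set X)) = Set.univ

/-- `N(V, 𝒰)`: times at which `f_1^n(V)` is not contained in any single member of `𝒰`. -/
def HNSet {X : Type*} (f : ℕ → X → X) (V : Set X) (𝒰 : Finset (Set X)) : Set ℕ :=
  {n : ℕ | 0 < n ∧ ∀ U ∈ 𝒰, ¬ traj f n '' V ⊆ U}

/-- `N(V, 𝒰)` for the autonomous system. -/
def HNSetAut {X : Type*} (g : X → X) (V : Set X) (𝒰 : Finset (Set X)) : Set ℕ :=
  {n : ℕ | 0 < n ∧ ∀ U ∈ 𝒰, ¬ g^[n] '' V ⊆ U}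

/-- Hausdorff sensitivity of `(X, f_{1,∞})`. -/
def HSensitive {X : Type*} [TopologicalSpace X] (f : ℕ → X → X) : Prop :=
  ∃ 𝒰 : Finset (Set X), IsFinOpenCover 𝒰 ∧
    ∀ V : Set X, IsOpen V → V.Nonempty → (HNSet f V 𝒰).Nonempty

/-- Hausdorff sensitivity of the autonomous system `(X, g)`. -/
def HSensitiveAut {X : Type*} [TopologicalSpace X] (g : X → X) : Prop :=
  ∃ 𝒰 : Finset (Set X), IsFinOpenCover 𝒰 ∧
    ∀ V : Set X, IsOpen V → V.Nonempty → (HNSetAut g V 𝒰).Nonempty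

/-- Thick Hausdorff sensitivity of `(X, f_{1,∞})`. -/
def ThickHSensitive {X : Type*} [TopologicalSpace X] (f : ℕ → X → X) : Prop :=
  ∃ 𝒰 : Finset (Set X), IsFinOpenCover 𝒰 ∧
    ∀ V : Set X, IsOpen V → V.Nonempty → Thick (HNSet f V 𝒰)

/-- Thick Hausdorff sensitivity of the autonomous system `(X, g)`. -/
def ThickHSensitiveAut {X : Type*} [TopologicalSpace X] (g : X → X) : Prop :=
  ∃ 𝒰 : Finset (Set X), IsFinOpenCover 𝒰 ∧
    ∀ V : Set X, IsOpen V → V.Nonempty → Thick (HNSetAut g V 𝒰)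

/-- Multi-Hausdorff sensitivity of the autonomous system `(X, g)`. -/
def MultiHSensitiveAut {X : Type*} [TopologicalSpace X] (g : X → X) : Prop :=
  ∃ 𝒰 : Finset (Set X), IsFinOpenCover 𝒰 ∧
    ∀ (m : ℕ) (V : Fin (m + 1) → Set X),
      (∀ i, IsOpen (V i)) → (∀ i, (V i).Nonempty) → (⋂ i, HNSetAut g (V i) 𝒰).Nonempty

section AuxAY

variable {X : Type*}

private def shf (f : ℕ → X → X) (r : ℕ) : ℕ → X → X := fun n => f (n + r)

private lemma traj_add (f : ℕ → X → X) (m n : ℕ) :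
    traj f (m + n) = traj (shf f m) n ∘ traj f m := by
  induction n with
  | zero => rfl
  | succ n ih =>
    have h3 : shf f m (n + 1) = f (m + n + 1) := congrArg f (by omega)
    calc traj f (m + (n + 1)) = f (m + n + 1) ∘ traj f (m + n) := rfl
      _ = f (m + n + 1) ∘ (traj (shf f m) n ∘ traj f m) := by rw [ih]
      _ = (shf f m (n + 1) ∘ traj (shf f m) n) ∘ traj f m := by
            rw [h3, Function.comp_assoc]
      _ = traj (shf f m) (n + 1) ∘ traj f m := rfl

private lemma traj_cont [TopologicalSpace X] {f : ℕ → X → X}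
    (hf : ∀ n, Continuous (f n)) (n : ℕ) : Continuous (traj f n) := by
  induction n with
  | zero => exact continuous_id
  | succ n ih => exact (hf (n + 1)).comp ih

variable {f : ℕ → X → X} {p : ℕ}

private lemma per_add (hper : PeriodicFam f p) (q k : ℕ) : f (k + q * p) = f k := by
  induction q with
  | zero => simp
  | succ q ih =>
    have h : k + (q + 1) * p = (k + q * p) + p := by ring
    rw [h, hper (k + q * p), ih]

private lemma shf_period_add (hper : PeriodicFam f p) {d : ℕ} (r : ℕ) (hd : p ∣ d) :
    shf f (d + r) = shf f r := by
  obtain ⟨q, rfl⟩ := hd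
  funext n
  show f (n + (p * q + r)) = f (n + r)
  have h : n + (p * q + r) = (n + r) + q * p := by ring
  rw [h, per_add hper]

private lemma shf_zero : shf f 0 = f := funext fun n => congrArg f (by omega)

private lemma shf_period (hper : PeriodicFam f p) {d : ℕ} (hd : p ∣ d) : shf f d = f := by
  have h := shf_period_add hper 0 hd
  rw [shf_zero] at h
  simpa using h

private lemma traj_split (hper : PeriodicFam f p) {a : ℕ} (b : ℕ) (ha : p ∣ a) :
    traj f (a + b) = traj f b ∘ traj f a := by
  rw [traj_add, shf_period hper ha]

private lemma iter_traj (hper : PeriodicFam f p) (k : ℕ) :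
    (traj f p)^[k] = traj f (k * p) := by
  induction k with
  | zero => simp only [Function.iterate_zero, Nat.zero_mul]; rfl
  | succ k ih =>
    have h1 : (k + 1) * p = k * p + p := by ring
    rw [h1, traj_split hper p ⟨k, Nat.mul_comm k p⟩, Function.iterate_succ', ih]

private lemma pmb [TopologicalSpace X] :
    ∀ (N : ℕ) (C : ℕ → Set X), (∀ i, IsClosed (C i)) → ∀ (U : Set X),
      IsOpen U → U.Nonempty → (U ⊆ ⋃ i ∈ Finset.range N, C i) →
      ∃ i < N, ∃ J : Set X, IsOpen J ∧ J.Nonempty ∧ J ⊆ C i := by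
  intro N
  induction N with
  | zero =>
    intro C _ U _ hne hsub
    obtain ⟨u, hu⟩ := hne
    simpa using hsub hu
  | succ N ih =>
    intro C hC U hUo hUne hsub
    by_cases h : (U ∩ (C N)ᶜ).Nonempty
    · have hsub' : U ∩ (C N)ᶜ ⊆ ⋃ i ∈ Finset.range N, C i := by
        rintro u ⟨huU, huC⟩
        have hmem := hsub huU
        simp only [Set.mem_iUnion, Finset.mem_range] at hmem ⊢
        obtain ⟨i, hi, hmem⟩ := hmem
        rcases Nat.lt_succ_iff_lt_or_eq.mp hi with h' | rfl
        · exact ⟨i, h', hmem⟩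
        · exact absurd hmem huC
      obtain ⟨i, hi, J, hJ⟩ := ih C hC (U ∩ (C N)ᶜ) (hUo.inter (hC N).isOpen_compl) h hsub'
      exact ⟨i, Nat.lt_succ_of_lt hi, J, hJ⟩
    · refine ⟨N, Nat.lt_succ_self N, U, hUo, hUne, ?_⟩
      intro u hu
      by_contra hu'
      exact h ⟨u, hu, hu'⟩

private lemma isolated_of_open_subset_finite [TopologicalSpace X] [T1Space X] {W F : Set X}
    (hW : IsOpen W) (hne : W.Nonempty) (hWF : W ⊆ F) (hF : F.Finite) :
    ∃ a : X, IsOpen ({a} : Set X) := by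
  obtain ⟨a, haW⟩ := hne
  refine ⟨a, ?_⟩
  have hfin : (W \ {a}).Finite := (hF.subset hWF).subset Set.diff_subset
  have heq : ({a} : Set X) = W ∩ (W \ {a})ᶜ := by
    ext v
    simp only [Set.mem_singleton_iff, Set.mem_inter_iff, Set.mem_compl_iff, Set.mem_diff,
      not_and, not_not]
    constructor
    · rintro rfl
      exact ⟨haW, fun _ => rfl⟩
    · rintro ⟨hvW, hv⟩
      exact hv hvW
  rw [heq]
  exact hW.inter hfin.isClosed.isOpen_compl

private lemma tail_dense [TopologicalSpace X] [T1Space X]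
    (hniso : ¬ ∃ a : X, IsOpen ({a} : Set X)) (g : X → X) (z : X)
    (hz : Dense (Set.range fun k : ℕ => g^[k] z)) {W : Set X} (hW : IsOpen W)
    (hne : W.Nonempty) (i : ℕ) : ∃ K, i < K ∧ g^[K] z ∈ W := by
  have hFfin : ((fun k : ℕ => g^[k] z) '' (Set.Iic i)).Finite := (Set.finite_Iic i).image _
  have hW'o : IsOpen (W \ ((fun k : ℕ => g^[k] z) '' (Set.Iic i))) := hW.sdiff hFfin.isClosed
  have hW'ne : (W \ ((fun k : ℕ => g^[k] z) '' (Set.Iic i))).Nonempty := by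
    rcases Set.eq_empty_or_nonempty (W \ ((fun k : ℕ => g^[k] z) '' (Set.Iic i))) with h | h
    · refine absurd (isolated_of_open_subset_finite hW hne ?_ hFfin) hniso
      intro w hw
      by_contra hwF
      exact (Set.eq_empty_iff_forall_notMem.mp h w) ⟨hw, hwF⟩
    · exact h
  obtain ⟨b, hbs, hbW'⟩ := hz.exists_mem_open hW'o hW'ne
  obtain ⟨K, hK⟩ := hbs
  have hK' : g^[K] z = b := hK
  refine ⟨K, ?_, by rw [hK']; exact hbW'.1⟩
  by_contra hKi
  push_neg at hKi
  exact hbW'.2 ⟨K, hKi, hK⟩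

end AuxAY

/-- topological Auslander–Yorke dichotomy. -/
theorem topEq_or_hSensitive {X : Type*} [TopologicalSpace X] [T3Space X]
    (f : ℕ → X → X) (hf : ∀ n, Continuous (f n))
    (p : ℕ) (hp : 0 < p) (hper : PeriodicFam f p)
    (htrans : ∃ x, TransPtAut (traj f p) x)
    (hmin : ∀ x : X, TransPt f x) :
    (∀ x y : X, EqPair f x y) ∨ HSensitive f := by
  classical
  by_cases hiso : ∃ a : X, IsOpen ({a} : Set X)
  · -- Case I: there is an isolated point; the system is equicontinuous.
    left
    obtain ⟨a, ha⟩ := hiso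
    intro x y
    unfold EqPair
    intro O hO
    have hyO' : y ∈ interior O := mem_interior_iff_mem_nhds.mpr hO
    obtain ⟨C₂, hC₂n, hC₂c, hC₂s⟩ :=
      exists_mem_nhds_isClosed_subset (isOpen_interior.mem_nhds hyO')
    have hyO₂ : y ∈ interior C₂ := mem_interior_iff_mem_nhds.mpr hC₂n
    have hO₂sub : closure (interior C₂) ⊆ interior O := by
      calc closure (interior C₂) ⊆ closure C₂ := closure_mono interior_subset
        _ = C₂ := hC₂c.closure_eq
        _ ⊆ _ := hC₂s
    -- find a time sending x to the isolated point a
    have hdx : Dense (Set.range fun n => traj f n x) := hmin x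
    obtain ⟨b, hbs, hba⟩ := hdx.exists_mem_open ha ⟨a, rfl⟩
    obtain ⟨t, hbt⟩ := hbs
    have hbt' : traj f t x = b := hbt
    have hta : traj f t x = a := by rw [hbt']; exact hba
    have hU₀o : IsOpen ((traj f t) ⁻¹' {a}) := ha.preimage (traj_cont hf t)
    have hxU₀ : x ∈ (traj f t) ⁻¹' {a} := hta
    have hsing : ∀ n, t ≤ n → ∀ v ∈ (traj f t) ⁻¹' {a},
        traj f n v = traj (shf f t) (n - t) a := by
      intro n hn v hv
      have e1 : traj f n = traj (shf f t) (n - t) ∘ traj f t := by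
        have h := traj_add f t (n - t)
        rw [← h]
        exact congrArg (traj f) (by omega)
      rw [e1]
      show traj (shf f t) (n - t) (traj f t v) = _
      rw [show traj f t v = a from hv]
    have hsmall : ∀ n : ℕ, ∃ U' : Set X, IsOpen U' ∧ x ∈ U' ∧
        (traj f n '' U' ⊆ interior O ∨ traj f n '' U' ∩ interior C₂ = ∅) := by
      intro n
      by_cases hq : traj f n x ∈ closure (interior C₂)
      · refine ⟨(traj f n) ⁻¹' (interior O), isOpen_interior.preimage (traj_cont hf n),
          hO₂sub hq, Or.inl (Set.image_preimage_subset _ _)⟩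
      · refine ⟨(traj f n) ⁻¹' (closure (interior C₂))ᶜ,
          isClosed_closure.isOpen_compl.preimage (traj_cont hf n), hq, Or.inr ?_⟩
        rw [Set.eq_empty_iff_forall_notMem]
        rintro v ⟨hv1, hv2⟩
        obtain ⟨u, hu, rfl⟩ := hv1
        exact hu (subset_closure hv2)
    choose Us hUso hUsx hUsp using hsmall
    refine ⟨(traj f t) ⁻¹' {a} ∩ ⋂ n ∈ Finset.range (t + 1), Us n,
      (hU₀o.inter (isOpen_biInter_finset (fun n _ => hUso n))).mem_nhds
        ⟨hxU₀, Set.mem_iInter₂.mpr (fun n _ => hUsx n)⟩,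
      interior C₂, isOpen_interior.mem_nhds hyO₂, ?_⟩
    intro n hn hne
    by_cases hcase : n ≤ t
    · have hsubU : (traj f t) ⁻¹' {a} ∩ ⋂ n ∈ Finset.range (t + 1), Us n ⊆ Us n :=
        fun v hv => Set.mem_iInter₂.mp hv.2 n (Finset.mem_range.mpr (by omega))
      rcases hUsp n with h | h
      · intro c hc
        exact interior_subset (h (Set.image_mono hsubU hc))
      · exfalso
        obtain ⟨c, hc, hcO₂⟩ := hne
        have hcc : c ∈ traj f n '' Us n ∩ interior C₂ := ⟨Set.image_mono hsubU hc, hcO₂⟩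
        rw [h] at hcc
        exact hcc
    · obtain ⟨c, hc, hcO₂⟩ := hne
      obtain ⟨u, huU, huc⟩ := hc
      have hcval : c = traj (shf f t) (n - t) a := by
        rw [← huc]
        exact hsing n (by omega) u huU.1
      intro c' hc'
      obtain ⟨v, hvU, hvc⟩ := hc'
      have : c' = traj (shf f t) (n - t) a := by
        rw [← hvc]
        exact hsing n (by omega) v hvU.1
      rw [this, ← hcval]
      exact interior_subset (hO₂sub (subset_closure hcO₂))
  · by_cases hHS : HSensitive f
    · exact Or.inr hHS
    · -- Case II: no isolated point and not Hausdorff sensitive ⇒ equicontinuous.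
      left
      obtain ⟨z, hz⟩ := htrans
      have hzd : Dense (Set.range fun k : ℕ => (traj f p)^[k] z) := hz
      intro x y
      unfold EqPair
      intro O hO
      have hyO' : y ∈ interior O := mem_interior_iff_mem_nhds.mpr hO
      obtain ⟨C₁, hC₁n, hC₁c, hC₁s⟩ :=
        exists_mem_nhds_isClosed_subset (isOpen_interior.mem_nhds hyO')
      have hyO₁ : y ∈ interior C₁ := mem_interior_iff_mem_nhds.mpr hC₁n
      have hO₁sub : closure (interior C₁) ⊆ interior O := by
        calc closure (interior C₁) ⊆ closure C₁ := closure_mono interior_subset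
          _ = C₁ := hC₁c.closure_eq
          _ ⊆ _ := hC₁s
      obtain ⟨C₂, hC₂n, hC₂c, hC₂s⟩ :=
        exists_mem_nhds_isClosed_subset (isOpen_interior.mem_nhds hyO₁)
      have hyO₂ : y ∈ interior C₂ := mem_interior_iff_mem_nhds.mpr hC₂n
      have hO₂sub : closure (interior C₂) ⊆ interior C₁ := by
        calc closure (interior C₂) ⊆ closure C₂ := closure_mono interior_subset
          _ = C₂ := hC₂c.closure_eq
          _ ⊆ _ := hC₂s
      set O₁ : Set X := interior C₁ with hO₁def
      set O₂ : Set X := interior C₂ with hO₂def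
      -- the finite open cover
      set 𝒰 : Finset (Set X) := {O₁, (closure O₂)ᶜ} with h𝒰
      have hcover : IsFinOpenCover 𝒰 := by
        constructor
        · intro U hU
          rcases Finset.mem_insert.mp hU with rfl | hU
          · exact isOpen_interior
          · rw [Finset.mem_singleton] at hU
            subst hU
            exact isClosed_closure.isOpen_compl
        · apply Set.eq_univ_of_forall
          intro v
          rw [h𝒰, Finset.coe_insert, Finset.coe_singleton, Set.sUnion_insert,
            Set.sUnion_singleton]
          by_cases hv : v ∈ closure O₂
          · exact Or.inl (hO₂sub hv)
          · exact Or.inr hv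
      -- a stable open set W
      have hex : ∃ W : Set X, IsOpen W ∧ W.Nonempty ∧ ¬ (HNSet f W 𝒰).Nonempty := by
        by_contra h
        push_neg at h
        exact hHS ⟨𝒰, hcover, fun V hVo hVne => h V hVo hVne⟩
      obtain ⟨W, hWo, hWne, hWst⟩ := hex
      have hW : ∀ m, 0 < m → traj f m '' W ⊆ O₁ ∨ traj f m '' W ⊆ (closure O₂)ᶜ := by
        intro m hm
        have hnm : m ∉ HNSet f W 𝒰 := fun hmem => hWst ⟨m, hmem⟩
        unfold HNSet at hnm
        simp only [Set.mem_setOf_eq, not_and] at hnm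
        have h2 := hnm hm
        push_neg at h2
        obtain ⟨U, hU𝒰, hUsub⟩ := h2
        rcases Finset.mem_insert.mp hU𝒰 with rfl | hU'
        · exact Or.inl hUsub
        · rw [Finset.mem_singleton] at hU'
          subst hU'
          exact Or.inr hUsub
      -- Step 5: the orbit of x enters a pullback of W at an aligned time.
      have hmain : ∃ t s : ℕ, 1 ≤ s ∧ p ∣ (t % p + s) ∧
          traj (shf f (t % p)) s (traj f t x) ∈ W := by
        by_contra hnot
        push_neg at hnot
        set V : ℕ → Set X :=
          fun r => ⋃ s : ℕ, ⋃ _ : (1 ≤ s ∧ p ∣ (r + s)), (traj (shf f r) s) ⁻¹' W with hV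
        set C : ℕ → Set X := fun r => closure (Set.range (traj f r)) ∩ (V r)ᶜ with hC
        have hVopen : ∀ r, IsOpen (V r) := by
          intro r
          exact isOpen_iUnion fun s => isOpen_iUnion fun _ =>
            hWo.preimage (traj_cont (fun n => hf (n + r)) s)
        have hCclosed : ∀ r, IsClosed (C r) :=
          fun r => isClosed_closure.inter (hVopen r).isClosed_compl
        have hrange : (Set.range fun n => traj f n x) ⊆ ⋃ r ∈ Finset.range p, C r := by
          rintro _ ⟨t, rfl⟩
          have hrp : t % p < p := Nat.mod_lt _ hp
          refine Set.mem_iUnion₂.mpr ⟨t % p, Finset.mem_range.mpr hrp, ?_, ?_⟩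
          · apply subset_closure
            refine ⟨(traj f p)^[t / p] x, ?_⟩
            have h1 : traj f (p * (t / p) + t % p) = traj f (t % p) ∘ traj f (p * (t / p)) :=
              traj_split hper _ ⟨t / p, rfl⟩
            have h2 : traj f t = traj f (t % p) ∘ traj f (p * (t / p)) := by
              rw [← h1]
              exact congrArg (traj f) (Nat.div_add_mod t p).symm
            show traj f (t % p) ((traj f p)^[t / p] x) = traj f t x
            rw [iter_traj hper, h2]
            show traj f (t % p) (traj f (t / p * p) x) = traj f (t % p) (traj f (p * (t / p)) x)
            rw [Nat.mul_comm]
          · intro hmem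
            simp only [hV, Set.mem_iUnion, Set.mem_preimage] at hmem
            obtain ⟨s, ⟨hs1, hsd⟩, hsW⟩ := hmem
            exact hnot t s hs1 hsd hsW
        have hclosedU : IsClosed (⋃ r ∈ Finset.range p, C r) :=
          Set.Finite.isClosed_biUnion (Finset.range p).finite_toSet (fun i _ => hCclosed i)
        have huniv : (Set.univ : Set X) ⊆ ⋃ r ∈ Finset.range p, C r := by
          intro v _
          have hd : Dense (Set.range fun n => traj f n x) := hmin x
          exact (IsClosed.closure_subset_iff hclosedU).mpr hrange (hd v)
        obtain ⟨r, hrp, J, hJo, hJne, hJC⟩ :=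
          pmb p C hCclosed Set.univ isOpen_univ ⟨z, trivial⟩ huniv
        obtain ⟨a0, ha0⟩ := hJne
        have hTr : closure (Set.range (traj f r)) ⊆
            closure (Set.range fun i : ℕ => traj f (i * p + r) z) := by
          refine closure_minimal ?_ isClosed_closure
          rintro _ ⟨w, rfl⟩
          have hw : w ∈ closure (Set.range fun k : ℕ => (traj f p)^[k] z) := hzd w
          have hmem : traj f r w ∈
              closure (traj f r '' (Set.range fun k : ℕ => (traj f p)^[k] z)) :=
            image_closure_subset_closure_image (traj_cont hf r) ⟨w, hw, rfl⟩
          have hfun : (traj f r ∘ fun k : ℕ => (traj f p)^[k] z)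
              = fun i : ℕ => traj f (i * p + r) z := by
            funext k
            show traj f r ((traj f p)^[k] z) = traj f (k * p + r) z
            rw [iter_traj hper]
            exact (congrFun (traj_split hper r ⟨k, Nat.mul_comm k p⟩) z).symm
          have heq : traj f r '' (Set.range fun k : ℕ => (traj f p)^[k] z)
              = Set.range fun i : ℕ => traj f (i * p + r) z := by
            rw [← Set.range_comp, hfun]
          rw [heq] at hmem
          exact hmem
        have ha0T : a0 ∈ closure (Set.range fun i : ℕ => traj f (i * p + r) z) :=
          hTr (hJC ha0).1
        obtain ⟨b, hbJ, hbT⟩ := mem_closure_iff.mp ha0T J hJo ha0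
        obtain ⟨i, hbi⟩ := hbT
        obtain ⟨K, hKi, hKW⟩ := tail_dense hiso (traj f p) z hzd hWo hWne i
        have hk1 : 1 ≤ K - i := by omega
        have hpM : p ≤ (K - i) * p := by
          calc p = 1 * p := (one_mul p).symm
            _ ≤ (K - i) * p := Nat.mul_le_mul_right p hk1
        have hrM : r ≤ (K - i) * p := le_trans (Nat.le_of_lt hrp) hpM
        have hrs : r + ((K - i) * p - r) = (K - i) * p := by omega
        have hdvd : p ∣ (r + ((K - i) * p - r)) := by
          rw [hrs]
          exact ⟨K - i, Nat.mul_comm (K - i) p⟩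
        have hbV : b ∈ V r := by
          simp only [hV, Set.mem_iUnion, Set.mem_preimage]
          refine ⟨(K - i) * p - r, ⟨by omega, hdvd⟩, ?_⟩
          have e1 : traj f ((i * p + r) + ((K - i) * p - r))
              = traj (shf f r) ((K - i) * p - r) ∘ traj f (i * p + r) := by
            rw [traj_add, shf_period_add hper r ⟨i, Nat.mul_comm i p⟩]
          have e2 : (i * p + r) + ((K - i) * p - r) = K * p := by
            have h3 : i * p + (K - i) * p = K * p := by
              rw [← Nat.add_mul]
              congr 1
              omega
            omega
          have h5 : traj f (K * p) z ∈ W := by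
            rw [← iter_traj hper]
            exact hKW
          have h6 := congrFun e1 z
          rw [e2] at h6
          have h6' : traj f (K * p) z
              = traj (shf f r) ((K - i) * p - r) (traj f (i * p + r) z) := h6
          rw [← hbi, ← h6']
          exact h5
        exact (hJC hbJ).2 hbV
      -- Step 6: build the equicontinuity neighborhood of x.
      obtain ⟨t, s, hs1, hdvd, hmem⟩ := hmain
      set r : ℕ := t % p with hrdef
      set U₀ : Set X := (traj (shf f r) s ∘ traj f t) ⁻¹' W with hU₀def
      have hU₀o : IsOpen U₀ :=
        hWo.preimage ((traj_cont (fun n => hf (n + r)) s).comp (traj_cont hf t))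
      have hxU₀ : x ∈ U₀ := hmem
      have hshf : shf f t = shf f r := by
        have h1 : shf f (p * (t / p) + t % p) = shf f (t % p) :=
          shf_period_add hper _ ⟨t / p, rfl⟩
        have h2 : p * (t / p) + t % p = t := Nat.div_add_mod t p
        rw [h2] at h1
        exact h1
      have htail : ∀ n, t + s < n → traj f n '' U₀ ⊆ traj f (n - t - s) '' W := by
        intro n hn
        have e1 : traj f n = traj (shf f r) (n - t) ∘ traj f t := by
          have h := traj_add f t (n - t)
          rw [hshf] at h
          rw [← h]
          exact congrArg (traj f) (by omega)
        have e2 : traj (shf f r) (n - t) = traj f (n - t - s) ∘ traj (shf f r) s := by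
          have h3 := traj_add (shf f r) s (n - t - s)
          have h4 : shf (shf f r) s = shf f (r + s) := by
            funext m
            exact congrArg f (by omega)
          have h5 : shf f (r + s) = f := shf_period hper hdvd
          rw [h4, h5] at h3
          rw [← h3]
          exact congrArg (traj (shf f r)) (by omega)
        rw [e1, e2]
        rw [show (traj f (n - t - s) ∘ traj (shf f r) s) ∘ traj f t
          = traj f (n - t - s) ∘ (traj (shf f r) s ∘ traj f t) from rfl]
        rw [Set.image_comp]
        exact Set.image_mono (Set.image_preimage_subset _ _)
      have hsmall : ∀ n : ℕ, ∃ U' : Set X, IsOpen U' ∧ x ∈ U' ∧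
          (traj f n '' U' ⊆ interior O ∨ traj f n '' U' ∩ O₂ = ∅) := by
        intro n
        by_cases hq : traj f n x ∈ closure O₂
        · refine ⟨(traj f n) ⁻¹' (interior O), isOpen_interior.preimage (traj_cont hf n),
            hO₁sub (subset_closure (hO₂sub hq)), Or.inl (Set.image_preimage_subset _ _)⟩
        · refine ⟨(traj f n) ⁻¹' (closure O₂)ᶜ,
            isClosed_closure.isOpen_compl.preimage (traj_cont hf n), hq, Or.inr ?_⟩
          rw [Set.eq_empty_iff_forall_notMem]
          rintro v ⟨hv1, hv2⟩
          obtain ⟨u, hu, rfl⟩ := hv1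
          exact hu (subset_closure hv2)
      choose Us hUso hUsx hUsp using hsmall
      refine ⟨U₀ ∩ ⋂ n ∈ Finset.range (t + s + 1), Us n,
        (hU₀o.inter (isOpen_biInter_finset (fun n _ => hUso n))).mem_nhds
          ⟨hxU₀, Set.mem_iInter₂.mpr (fun n _ => hUsx n)⟩,
        O₂, isOpen_interior.mem_nhds hyO₂, ?_⟩
      intro n hn hne
      by_cases hcase : n ≤ t + s
      · have hsubU : U₀ ∩ ⋂ n ∈ Finset.range (t + s + 1), Us n ⊆ Us n :=
          fun v hv => Set.mem_iInter₂.mp hv.2 n (Finset.mem_range.mpr (by omega))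
        rcases hUsp n with h | h
        · intro c hc
          exact interior_subset (h (Set.image_mono hsubU hc))
        · exfalso
          obtain ⟨c, hc, hcO₂⟩ := hne
          have hcc : c ∈ traj f n '' Us n ∩ O₂ := ⟨Set.image_mono hsubU hc, hcO₂⟩
          rw [h] at hcc
          exact hcc
      · have hn' : t + s < n := by omega
        have himg := htail n hn'
        rcases hW (n - t - s) (by omega) with h | h
        · intro c hc
          have hcW : c ∈ traj f (n - t - s) '' W :=
            himg (Set.image_mono Set.inter_subset_left hc)
          exact interior_subset (hO₁sub (subset_closure (h hcW)))
        · exfalso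
          obtain ⟨c, hc, hcO₂⟩ := hne
          have hcW : c ∈ traj f (n - t - s) '' W :=
            himg (Set.image_mono Set.inter_subset_left hc)
          exact (h hcW) (subset_closure hcO₂)
end

section
/- Let (X, f_{1,∞}) be a periodic non-autonomous system on a Hausdorff space X with period p and induced map g. Then (X, f_{1,∞}) is Hausdorff sensitive if and only if (X, g) is Hausdorff sensitive. -/
open Topology Filter Set
open scoped Uniformity

lemma traj_continuous {X : Type*} [TopologicalSpace X] (f : ℕ → X → X)
    (hf : ∀ n, Continuous (f n)) : ∀ n, Continuous (traj f n) := by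
  intro n
  induction n with
  | zero => exact continuous_id
  | succ n ih => exact (hf (n + 1)).comp ih

lemma traj_add_p {X : Type*} (f : ℕ → X → X) (p : ℕ) (hper : PeriodicFam f p) :
    ∀ n, traj f (n + p) = traj f n ∘ traj f p := by
  intro n
  induction n with
  | zero => simp [traj]
  | succ n ih =>
      have h : n + 1 + p = (n + p) + 1 := by ring
      rw [h]
      show f (n + p + 1) ∘ traj f (n + p) = (f (n + 1) ∘ traj f n) ∘ traj f p
      have h2 : n + p + 1 = (n + 1) + p := by ring
      rw [h2, hper (n + 1), ih]
      rfl

lemma traj_add_mul {X : Type*} (f : ℕ → X → X) (p : ℕ) (hper : PeriodicFam f p) :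
    ∀ k n, traj f (n + k * p) = traj f n ∘ (traj f p)^[k] := by
  intro k
  induction k with
  | zero => intro n; simp
  | succ k ih =>
      intro n
      have h : n + (k + 1) * p = (n + k * p) + p := by ring
      rw [h, traj_add_p f p hper, ih n, Function.iterate_succ]
      rfl

lemma traj_mul {X : Type*} (f : ℕ → X → X) (p : ℕ) (hper : PeriodicFam f p)
    (k : ℕ) : traj f (k * p) = (traj f p)^[k] := by
  have := traj_add_mul f p hper k 0
  simpa [traj] using this

theorem hSensitive_iff_hSensitive_induced {X : Type*} [TopologicalSpace X] [T2Space X]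
    (f : ℕ → X → X) (hf : ∀ n, Continuous (f n))
    (p : ℕ) (hp : 0 < p) (hper : PeriodicFam f p) :
    HSensitive f ↔ HSensitiveAut (traj f p) := by
  classical
  constructor
  · rintro ⟨𝒰₀, ⟨hopen₀, hcov₀⟩, hsen₀⟩
    -- choose, for each x and r, a member of 𝒰₀ containing traj f r x
    have hmem : ∀ x : X, ∃ U ∈ 𝒰₀, x ∈ U := by
      intro x
      have : x ∈ ⋃₀ (↑𝒰₀ : Set (Set X)) := by rw [hcov₀]; trivial
      obtain ⟨U, hU, hxU⟩ := this
      exact ⟨U, hU, hxU⟩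
    choose ch hch hxch using hmem
    set g := traj f p with hg
    set s : Finset (Fin p → Set X) := Fintype.piFinset (fun _ => 𝒰₀) with hs
    refine ⟨s.image (fun φ => ⋂ r : Fin p, (traj f (r : ℕ))⁻¹' (φ r)), ⟨?_, ?_⟩, ?_⟩
    · intro W hW
      simp only [Finset.mem_image] at hW
      obtain ⟨φ, hφ, rfl⟩ := hW
      refine isOpen_iInter_of_finite fun r => ?_
      exact (hopen₀ _ ((Fintype.mem_piFinset.1 hφ) r)).preimage
        (traj_continuous f hf _)
    · ext x
      simp only [Set.mem_sUnion, Set.mem_univ, iff_true, Finset.coe_image,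
        Set.mem_image, Finset.mem_coe]
      refine ⟨_, ⟨fun r : Fin p => ch (traj f (r : ℕ) x), ?_, rfl⟩, ?_⟩
      · simp [hs, Fintype.mem_piFinset, fun r : Fin p => hch (traj f (r : ℕ) x)]
      · exact Set.mem_iInter.2 fun r => hxch (traj f (r : ℕ) x)
    · intro V hV hVne
      obtain ⟨x, hx⟩ := hVne
      set V' : Set X := V ∩ ⋂ r : Fin p, (traj f (r : ℕ))⁻¹' (ch (traj f (r : ℕ) x)) with hV'
      have hV'open : IsOpen V' :=
        hV.inter (isOpen_iInter_of_finite fun r =>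
          (hopen₀ _ (hch _)).preimage (traj_continuous f hf _))
      have hxV' : x ∈ V' :=
        ⟨hx, Set.mem_iInter.2 fun r => hxch (traj f (r : ℕ) x)⟩
      obtain ⟨n, hn0, hn⟩ := hsen₀ V' hV'open ⟨x, hxV'⟩
      have hnp : p ≤ n := by
        by_contra h
        push_neg at h
        refine hn (ch (traj f n x)) (hch _) ?_
        rintro y ⟨v, hv, rfl⟩
        have := (Set.mem_iInter.1 hv.2) ⟨n, h⟩
        simpa using this
      set q := n / p with hq
      set r := n % p with hr
      have hq0 : 0 < q := Nat.div_pos hnp hp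
      have hrp : r < p := Nat.mod_lt _ hp
      have hnrq : n = r + q * p := by
        rw [hr, hq, Nat.mul_comm]
        exact (Nat.mod_add_div n p).symm
      refine ⟨q, hq0, ?_⟩
      intro W hW hsub
      simp only [Finset.mem_image] at hW
      obtain ⟨φ, hφ, rfl⟩ := hW
      have hφr : φ ⟨r, hrp⟩ ∈ 𝒰₀ := (Fintype.mem_piFinset.1 hφ) ⟨r, hrp⟩
      refine hn (φ ⟨r, hrp⟩) hφr ?_
      rintro y ⟨v, hv, rfl⟩
      have hvW : (traj f p)^[q] v ∈ ⋂ r' : Fin p, (traj f (r' : ℕ))⁻¹' (φ r') :=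
        hsub ⟨v, hv.1, rfl⟩
      have h2 := Set.mem_iInter.1 hvW ⟨r, hrp⟩
      have h3 : traj f n v = traj f r ((traj f p)^[q] v) := by
        rw [hnrq, traj_add_mul f p hper]; rfl
      rw [h3]
      exact h2
  · rintro ⟨𝒰, hc, hsen⟩
    refine ⟨𝒰, hc, ?_⟩
    intro V hV hVne
    obtain ⟨n, hn0, hn⟩ := hsen V hV hVne
    refine ⟨n * p, Nat.mul_pos hn0 hp, ?_⟩
    intro U hU hsub
    refine hn U hU ?_
    rw [← traj_mul f p hper n]
    exact hsub
end
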